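/- arXiv:2510.16910 — 3 statements merged into one kernel-verified Lean document; each statement's English description precedes it below -/
import Mathlib

section
/- Let K be a compact Hausdorff space and φ a homeomorphism of K. Suppose T is the weighted composition operator Tg = w·(g∘φ) on C(K) with w nonvanishing and σ(T) ⊆ 𝕋. Then there exists a point s ∈ K such that |w_n(s)| ≤ 1 and |w_n(φ^{-n}(s))| ≥ 1 for all n ∈ ℕ, where w_n = w·(w∘φ)···(w∘φ^{n−1}). -/
/-!
Put `a = log ‖w‖`, so that `log ‖wₙ‖` is the Birkhoff sum `Aₙ` of `a` over `φ`, and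
`Tⁿ g = wₙ · (g ∘ φⁿ)`. Since `0 ∉ σ(T)`, `T` is invertible and `σ(T⁻¹) = σ(T)⁻¹` also lies in the
unit circle, so Gelfand's formula for `T` and `T⁻¹` gives `sup |Aₙ| = o(n)`.

Along the orbit of any point `y`, let `p : ℤ → ℝ` be a potential, `p (m + n) - p m = Aₙ (φᵐ y)`.
It grows sublinearly, so `p m - 2ε|m|` attains its maximum at some `j`, and `x = φʲ y` then
satisfies `Aₙ x ≤ 2εn` and `Aₙ (φ⁻ⁿ x) ≥ -2εn` for all `n`. These sets of points are closed,
nonempty and decrease with `ε`, so by compactness some `s` lies in all of them.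
-/

open Filter Topology Finset

theorem Int.exists_add_one_eq_add {M : Type*} [AddCommGroup M] (c : ℤ → M) :
    ∃ p : ℤ → M, ∀ m, p (m + 1) = p m + c m := by
  refine ⟨fun m ↦ ∑ i ∈ Ico 0 m, c i - ∑ i ∈ Ico m 0, c i, fun m ↦ ?_⟩
  dsimp only
  rcases le_or_gt 0 m with hm | hm
  · rw [← insert_Ico_right_eq_Ico_add_one hm, sum_insert (by simp),
      Ico_eq_empty_of_le hm, Ico_eq_empty_of_le (by omega : (0 : ℤ) ≤ m + 1)]
    abel
  · rw [← insert_Ico_add_one_left_eq_Ico hm, sum_insert (by simp),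
      Ico_eq_empty_of_le hm.le, Ico_eq_empty_of_le (by omega : m + 1 ≤ 0)]
    abel

theorem Equiv.Perm.exists_birkhoffSum_zpow_eq_sub {α M : Type*} [AddCommGroup M]
    (e : Equiv.Perm α) (g : α → M) (y : α) :
    ∃ p : ℤ → M, ∀ (m : ℤ) (n : ℕ), birkhoffSum e g n ((e ^ m) y) = p (m + n) - p m := by
  obtain ⟨p, hp⟩ := Int.exists_add_one_eq_add fun m ↦ g ((e ^ m) y)
  refine ⟨p, fun m n ↦ ?_⟩
  induction n with
  | zero => simp
  | succ n ih =>
    rw [birkhoffSum_succ, ih, Equiv.Perm.iterate_eq_pow, ← Equiv.Perm.mul_apply,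
      ← zpow_natCast, ← zpow_add, Nat.cast_succ, ← add_assoc, hp, add_comm (n : ℤ)]
    abel

theorem Int.exists_forall_sub_le_two_mul_abs_sub {p : ℤ → ℝ} {ε C : ℝ} (hε : 0 < ε)
    (hp : ∀ m, p m ≤ ε * |(m : ℝ)| + C) : ∃ j, ∀ m, p m - p j ≤ 2 * ε * |(m - j : ℝ)| := by
  have hQ : Tendsto (fun m : ℤ ↦ p m - 2 * ε * |(m : ℝ)|) cofinite atBot := by
    refine tendsto_atBot_mono (fun m ↦ ?_) <| tendsto_atBot_add_const_left _ C <|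
      (cocompact_eq_cofinite ℤ ▸ tendsto_norm_cocompact_atTop).const_mul_atTop_of_neg
        (neg_lt_zero.mpr hε)
    rw [Int.norm_eq_abs]
    linarith [hp m]
  obtain ⟨j, hj⟩ := hQ.exists_forall_ge
  refine ⟨j, fun m ↦ ?_⟩
  have := abs_sub_abs_le_abs_sub (m : ℝ) j
  nlinarith [hj m]

theorem Equiv.Perm.exists_birkhoffSum_le_two_mul {α : Type*} [Nonempty α] (e : Equiv.Perm α)
    (g : α → ℝ) {ε C : ℝ} (hε : 0 < ε) (h : ∀ n x, |birkhoffSum e g n x| ≤ ε * n + C) :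
    ∃ x, ∀ n : ℕ, birkhoffSum e g n x ≤ 2 * ε * n ∧
      -(2 * ε * n) ≤ birkhoffSum e g n (e.symm^[n] x) := by
  obtain ⟨y⟩ := ‹Nonempty α›
  obtain ⟨p, hp⟩ := e.exists_birkhoffSum_zpow_eq_sub g y
  have hbound : ∀ m, p m - p 0 ≤ ε * |(m : ℝ)| + C := by
    intro m
    obtain ⟨n, rfl | rfl⟩ := Int.eq_nat_or_neg m
    · have h0 := hp 0 n
      rw [zpow_zero, Equiv.Perm.one_apply, zero_add] at h0
      simpa [h0] using (abs_le.mp (h n y)).2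
    · have := (abs_le.mp (h n ((e ^ (-n : ℤ)) y))).1
      rw [hp] at this
      simp only [neg_add_cancel, Int.cast_neg, Int.cast_natCast, abs_neg, Nat.abs_cast] at this ⊢
      linarith
  obtain ⟨j, hj⟩ := Int.exists_forall_sub_le_two_mul_abs_sub (p := fun m ↦ p m - p 0) hε hbound
  refine ⟨(e ^ j) y, fun n ↦ ⟨?_, ?_⟩⟩
  · have := hj (j + n)
    rw [hp]
    simp only [Int.cast_add, Int.cast_natCast, add_sub_cancel_left, Nat.abs_cast] at this
    linarith
  · have := hj (j - n)
    rw [Equiv.Perm.iterate_eq_pow, ← Equiv.Perm.mul_apply, ← Equiv.Perm.inv_def, inv_pow,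
      ← zpow_natCast, ← zpow_neg, ← zpow_add, neg_add_eq_sub, hp, sub_add_cancel]
    simp only [Int.cast_sub, Int.cast_natCast, sub_sub_cancel_left, abs_neg,
      Nat.abs_cast] at this
    linarith

theorem exists_abs_birkhoffSum_le_mul_add {α : Type*} (f : α → α) (g : α → ℝ) {M ε : ℝ}
    (hε : 0 ≤ ε) (hM : ∀ x, |g x| ≤ M) (h : ∀ᶠ n in atTop, ∀ x, |birkhoffSum f g n x| ≤ ε * n) :
    ∃ C, ∀ n x, |birkhoffSum f g n x| ≤ ε * n + C := by
  obtain ⟨N, hN⟩ := eventually_atTop.mp h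
  refine ⟨N * M, fun n x ↦ ?_⟩
  have hM0 : 0 ≤ M := (abs_nonneg _).trans (hM x)
  rcases le_or_gt N n with hn | hn
  · linarith [hN n hn x, mul_nonneg (Nat.cast_nonneg N) hM0]
  · calc |birkhoffSum f g n x| ≤ ∑ k ∈ range n, |g (f^[k] x)| := abs_sum_le_sum_abs _ _
      _ ≤ n * M := by simpa using sum_le_card_nsmul (range n) _ _ fun k _ ↦ hM (f^[k] x)
      _ ≤ ε * n + N * M := by
        nlinarith [mul_nonneg hε (Nat.cast_nonneg n), (Nat.cast_lt.mpr hn : (n : ℝ) < N)]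

theorem Homeomorph.exists_birkhoffSum_nonpos {K : Type*} [TopologicalSpace K] [CompactSpace K]
    [Nonempty K] (φ : K ≃ₜ K) {g : K → ℝ} (hg : Continuous g)
    (h : ∀ ε > 0, ∀ᶠ n in atTop, ∀ x, |birkhoffSum φ g n x| ≤ ε * n) :
    ∃ s, ∀ n, birkhoffSum φ g n s ≤ 0 ∧ 0 ≤ birkhoffSum φ g n (φ.symm^[n] s) := by
  let F : Set.Ioi (0 : ℝ) → Set K := fun ε ↦
    {x | ∀ n : ℕ, birkhoffSum φ g n x ≤ (ε : ℝ) * n ∧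
      -((ε : ℝ) * n) ≤ birkhoffSum φ g n (φ.symm^[n] x)}
  have hF_mono : Monotone F := fun ε ε' hεε' x hx n ↦
    have := mul_le_mul_of_nonneg_right (Subtype.coe_le_coe.mpr hεε') (Nat.cast_nonneg n)
    ⟨(hx n).1.trans this, (neg_le_neg this).trans (hx n).2⟩
  have hF_nonempty : ∀ ε, (F ε).Nonempty := by
    rintro ⟨ε, hε : 0 < ε⟩
    obtain ⟨M, hM⟩ := isCompact_univ.exists_bound_of_continuousOn hg.continuousOn
    obtain ⟨C, hC⟩ := exists_abs_birkhoffSum_le_mul_add φ g (half_pos hε).le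
      (fun x ↦ hM x trivial) (h _ (half_pos hε))
    obtain ⟨x, hx⟩ := Equiv.Perm.exists_birkhoffSum_le_two_mul φ.toEquiv g (half_pos hε) hC
    exact ⟨x, fun n ↦ by simpa [mul_div_cancel₀] using hx n⟩
  have hF_closed : ∀ ε, IsClosed (F ε) := by
    have hcont : ∀ n, Continuous (birkhoffSum φ g n) := fun n ↦
      continuous_finsetSum _ fun k _ ↦ hg.comp (φ.continuous.iterate k)
    intro ε
    simp only [F, Set.ofPred_forall]
    exact isClosed_iInter fun n ↦ (isClosed_le (hcont n) continuous_const).inter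
      (isClosed_le continuous_const ((hcont n).comp (φ.symm.continuous.iterate n)))
  obtain ⟨s, hs⟩ := IsCompact.nonempty_iInter_of_directed_nonempty_isCompact_isClosed F
    hF_mono.directed_ge hF_nonempty (fun ε ↦ (hF_closed ε).isCompact) hF_closed
  simp only [Set.mem_iInter] at hs
  have hlim : ∀ n : ℕ, Tendsto (fun ε : ℝ ↦ ε * n) (𝓝[>] 0) (𝓝 0) := fun n ↦ by
    simpa using ((continuous_mul_const (n : ℝ)).tendsto 0).mono_left nhdsWithin_le_nhds
  refine ⟨s, fun n ↦ ⟨?_, ?_⟩⟩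
  · exact ge_of_tendsto (hlim n) (eventually_nhdsWithin_of_forall fun ε hε ↦ (hs ⟨ε, hε⟩ n).1)
  · simpa using le_of_tendsto (hlim n).neg
      (eventually_nhdsWithin_of_forall fun ε hε ↦ (hs ⟨ε, hε⟩ n).2)

section Spectrum

variable {𝕜 R : Type*} [NormedField 𝕜] [Ring R] [Algebra 𝕜 R]

theorem spectralRadius_le_one_of_subset_sphere {a : R}
    (h : spectrum 𝕜 a ⊆ Metric.sphere (0 : 𝕜) 1) : spectralRadius 𝕜 a ≤ 1 :=
  iSup₂_le fun k hk ↦ by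
    have : ‖k‖₊ = 1 := by simpa [← NNReal.coe_inj] using h hk
    simp [this]

theorem spectrum_subset_sphere_of_mul_eq_one {a b : R} (hab : a * b = 1) (hba : b * a = 1)
    (h : spectrum 𝕜 a ⊆ Metric.sphere (0 : 𝕜) 1) : spectrum 𝕜 b ⊆ Metric.sphere (0 : 𝕜) 1 := by
  let u : Rˣ := ⟨a, b, hab, hba⟩
  rw [show b = ↑u⁻¹ from rfl, ← spectrum.map_inv]
  intro z hz
  simpa using h hz

end Spectrum

theorem eventually_norm_pow_le_exp_mul {A : Type*} [NormedRing A] [NormedAlgebra ℂ A]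
    [CompleteSpace A] (a : A) (h : spectralRadius ℂ a ≤ 1) {ε : ℝ} (hε : 0 < ε) :
    ∀ᶠ n : ℕ in atTop, ‖a ^ n‖ ≤ Real.exp (ε * n) := by
  have hlt : spectralRadius ℂ a < ENNReal.ofReal (Real.exp ε) :=
    h.trans_lt (by simpa using Real.one_lt_exp_iff.mpr hε)
  filter_upwards [(spectrum.pow_norm_pow_one_div_tendsto_nhds_spectralRadius a).eventually
    (gt_mem_nhds hlt), eventually_gt_atTop 0] with n hn hn0
  rw [ENNReal.ofReal_lt_ofReal_iff (Real.exp_pos ε), one_div,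
    Real.rpow_inv_lt_iff_of_pos (norm_nonneg _) (Real.exp_pos ε).le (by positivity),
    ← Real.exp_mul] at hn
  simpa only [mul_comm] using hn.le

theorem ContinuousLinearMap.eventually_norm_pow_le_exp_mul_of_mul_eq_one {E : Type*}
    [NormedAddCommGroup E] [NormedSpace ℂ E] [CompleteSpace E] {T S : E →L[ℂ] E}
    (hTS : T * S = 1) (hST : S * T = 1) (hσ : spectrum ℂ T ⊆ Metric.sphere (0 : ℂ) 1)
    {ε : ℝ} (hε : 0 < ε) :
    ∀ᶠ n : ℕ in atTop, ‖T ^ n‖ ≤ Real.exp (ε * n) ∧ ‖S ^ n‖ ≤ Real.exp (ε * n) :=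
  (eventually_norm_pow_le_exp_mul T (spectralRadius_le_one_of_subset_sphere hσ) hε).and
    (eventually_norm_pow_le_exp_mul S (spectralRadius_le_one_of_subset_sphere
      (spectrum_subset_sphere_of_mul_eq_one hTS hST hσ)) hε)

theorem log_norm_prod_eq_birkhoffSum {α 𝕜 : Type*} [NormedField 𝕜] (f : α → α) {w : α → 𝕜}
    (hw : ∀ x, w x ≠ 0) (n : ℕ) (x : α) :
    Real.log ‖∏ i ∈ range n, w (f^[i] x)‖ = birkhoffSum f (fun x ↦ Real.log ‖w x‖) n x := by
  rw [norm_prod, Real.log_prod fun i _ ↦ norm_ne_zero_iff.mpr (hw _)]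
  rfl

section WeightedComposition

variable {K : Type*} [TopologicalSpace K] [CompactSpace K] {φ : K ≃ₜ K} {w : C(K, ℂ)}

theorem weightedComposition_pow_apply {T : C(K, ℂ) →L[ℂ] C(K, ℂ)}
    (hT : ∀ g t, T g t = w t * g (φ t)) (n : ℕ) (g : C(K, ℂ)) (t : K) :
    (T ^ n) g t = (∏ i ∈ range n, w (φ^[i] t)) * g (φ^[n] t) := by
  induction n generalizing t with
  | zero => simp
  | succ n ih =>
    rw [pow_succ', mul_apply_eq_comp, hT, ih, prod_range_succ']
    simp only [Function.iterate_succ_apply, Function.iterate_zero_apply]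
    ring

theorem norm_prod_le_norm_weightedComposition_pow {T : C(K, ℂ) →L[ℂ] C(K, ℂ)}
    (hT : ∀ g t, T g t = w t * g (φ t)) (n : ℕ) (t : K) :
    ‖∏ i ∈ range n, w (φ^[i] t)‖ ≤ ‖T ^ n‖ := by
  have : Nonempty K := ⟨t⟩
  calc ‖∏ i ∈ range n, w (φ^[i] t)‖ = ‖(T ^ n) 1 t‖ := by
        rw [weightedComposition_pow_apply hT]; simp
    _ ≤ ‖(T ^ n) 1‖ := ContinuousMap.norm_coe_le_norm _ t
    _ ≤ ‖T ^ n‖ := by simpa using (T ^ n).le_opNorm 1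

theorem norm_prod_inv_le_norm_pow_of_mul_eq_one {T S : C(K, ℂ) →L[ℂ] C(K, ℂ)}
    (hT : ∀ g t, T g t = w t * g (φ t)) (hTS : T * S = 1) (n : ℕ) (t : K) :
    ‖∏ i ∈ range n, w (φ^[i] t)‖⁻¹ ≤ ‖S ^ n‖ := by
  have : Nonempty K := ⟨t⟩
  have hinv : (∏ i ∈ range n, w (φ^[i] t)) * (S ^ n) 1 (φ^[n] t) = 1 := by
    rw [← weightedComposition_pow_apply hT, ← mul_apply_eq_comp, pow_mul_pow_eq_one n hTS,
      one_apply_eq_self, ContinuousMap.one_apply]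
  calc ‖∏ i ∈ range n, w (φ^[i] t)‖⁻¹ = ‖(S ^ n) 1 (φ^[n] t)‖ := by
        rw [← norm_inv, inv_eq_of_mul_eq_one_right hinv]
    _ ≤ ‖(S ^ n) 1‖ := ContinuousMap.norm_coe_le_norm _ _
    _ ≤ ‖S ^ n‖ := by simpa using (S ^ n).le_opNorm 1

theorem eventually_abs_log_norm_prod_le {T : C(K, ℂ) →L[ℂ] C(K, ℂ)} (hw : ∀ t, w t ≠ 0)
    (hT : ∀ g t, T g t = w t * g (φ t)) (hσ : spectrum ℂ T ⊆ Metric.sphere (0 : ℂ) 1)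
    {ε : ℝ} (hε : 0 < ε) :
    ∀ᶠ n : ℕ in atTop, ∀ t, |Real.log ‖∏ i ∈ range n, w (φ^[i] t)‖| ≤ ε * n := by
  have hunit : IsUnit T := spectrum.isUnit_of_zero_notMem ℂ fun h0 ↦ by simpa using hσ h0
  have hTS := Ring.mul_inverse_cancel T hunit
  have hST := Ring.inverse_mul_cancel T hunit
  filter_upwards [T.eventually_norm_pow_le_exp_mul_of_mul_eq_one hTS hST hσ hε]
    with n ⟨hTn, hSn⟩ t
  have hpos : 0 < ‖∏ i ∈ range n, w (φ^[i] t)‖ :=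
    norm_pos_iff.mpr (prod_ne_zero_iff.mpr fun i _ ↦ hw _)
  rw [abs_le, neg_le, ← Real.log_inv, Real.log_le_iff_le_exp (inv_pos.mpr hpos),
    Real.log_le_iff_le_exp hpos]
  exact ⟨(norm_prod_inv_le_norm_pow_of_mul_eq_one hT hTS n t).trans hSn,
    (norm_prod_le_norm_weightedComposition_pow hT n t).trans hTn⟩

end WeightedComposition

theorem stmt10_general {K : Type*} [TopologicalSpace K] [CompactSpace K] [Nonempty K]
    (φ : K ≃ₜ K) (w : C(K, ℂ)) (hw : ∀ t, w t ≠ 0)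
    (T : C(K, ℂ) →L[ℂ] C(K, ℂ))
    (hT : ∀ (g : C(K, ℂ)) (t : K), T g t = w t * g (φ t))
    (wn : ℕ → C(K, ℂ))
    (hwn : ∀ (n : ℕ) (t : K), wn n t = ∏ i ∈ Finset.range n, w ((⇑φ)^[i] t))
    (hσ : spectrum ℂ T ⊆ Metric.sphere (0 : ℂ) 1) :
    ∃ s : K, ∀ n : ℕ, ‖wn n s‖ ≤ 1 ∧ 1 ≤ ‖wn n ((⇑φ.symm)^[n] s)‖ := by
  have hlog : ∀ n t, Real.log ‖wn n t‖ = birkhoffSum φ (fun t ↦ Real.log ‖w t‖) n t :=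
    fun n t ↦ by rw [hwn, log_norm_prod_eq_birkhoffSum _ hw]
  have hpos : ∀ n t, 0 < ‖wn n t‖ := fun n t ↦ by
    rw [hwn]
    exact norm_pos_iff.mpr (prod_ne_zero_iff.mpr fun i _ ↦ hw _)
  obtain ⟨s, hs⟩ := φ.exists_birkhoffSum_nonpos
    (w.continuous.norm.log fun t ↦ norm_ne_zero_iff.mpr (hw t)) fun ε hε ↦ by
      simpa only [← hwn, hlog] using eventually_abs_log_norm_prod_le hw hT hσ hε
  refine ⟨s, fun n ↦ ?_⟩
  rw [← Real.log_nonpos_iff (norm_nonneg _), ← Real.log_nonneg_iff (hpos _ _), hlog, hlog]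
  exact hs n

/-- If `Tg = w·(g∘φ)` with nonvanishing `w` has spectrum contained in the unit circle,
then there is a point `s ∈ K` with `|wₙ(s)| ≤ 1` and `|wₙ(φ⁻ⁿ(s))| ≥ 1` for all `n`. -/
theorem stmt10 {K : Type*} [TopologicalSpace K] [CompactSpace K] [T2Space K] [Nonempty K]
    (φ : K ≃ₜ K) (w : C(K, ℂ)) (hw : ∀ t, w t ≠ 0)
    (T : C(K, ℂ) →L[ℂ] C(K, ℂ))
    (hT : ∀ (g : C(K, ℂ)) (t : K), T g t = w t * g (φ t))
    (wn : ℕ → C(K, ℂ))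
    (hwn : ∀ (n : ℕ) (t : K), wn n t = ∏ i ∈ Finset.range n, w ((⇑φ)^[i] t))
    (hσ : spectrum ℂ T ⊆ Metric.sphere (0 : ℂ) 1) :
    ∃ s : K, ∀ n : ℕ, ‖wn n s‖ ≤ 1 ∧ 1 ≤ ‖wn n ((⇑φ.symm)^[n] s)‖ :=
  stmt10_general φ w hw T hT wn hwn hσ
end

section
/- Let K be a compact Hausdorff space, φ a homeomorphism of K, s ∈ K a non-φ-periodic point, λ ≠ 0, and w ∈ C(K) such that the bilateral series μ = ∑_{n≥0} λ^{−n} w_n(s) δ_{φ^n(s)} + ∑_{n≥1} λ^n δ_{φ^{−n}(s)} / w_n(φ^{−n}(s)) converges absolutely in the dual of C(K) (all denominators nonzero). Then μ is an eigenvector of the adjoint T′ of the weighted composition operator T g = w·(g∘φ): T′μ = λ μ. -/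
/-!
Index the orbit of `s` by `ℤ`, `x k = φᵏ(s)`, and write `μ = ∑ₖ cₖ δ_{x k}` with `c₀ = 1`.
The two halves of the defining series are exactly what makes `cₖ w(x k) = λ c_{k+1}` hold for
every `k ∈ ℤ`, so `μ(Tg) = ∑ₖ cₖ w(x k) g(x (k+1)) = λ ∑ₖ c_{k+1} g(x (k+1)) = λ μ(g)` after
shifting the index. Since the points `x k` are distinct and `(cₖ)` is absolutely summable,
testing `μ` against Urysohn functions that equal `1` at `s` and vanish at more and more of the
other orbit points gives `μ(g) → c₀ = 1`, so `μ ≠ 0`.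
-/

open Filter Function Set Topology

namespace Equiv.Perm

variable {α : Type*} (σ : Perm α) (s : α)

theorem zpow_natCast_apply (n : ℕ) : (σ ^ (n : ℤ)) s = σ^[n] s := by
  rw [zpow_natCast, coe_pow]

theorem zpow_neg_natCast_add_one_apply (n : ℕ) :
    (σ ^ (-((n : ℤ) + 1))) s = (⇑σ.symm)^[n + 1] s := by
  rw [← Nat.cast_succ, zpow_neg, zpow_natCast, ← inv_pow, coe_pow, inv_def]

theorem zpow_add_one_apply (k : ℤ) : (σ ^ (k + 1)) s = σ ((σ ^ k) s) := by
  rw [add_comm, zpow_one_add, mul_apply]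

theorem injective_zpow_apply (hs : ∀ p : ℕ, 0 < p → σ^[p] s ≠ s) :
    Injective fun k : ℤ => (σ ^ k) s := by
  intro k l hkl
  have hfix : (σ ^ (k - l)) s = s := by
    rw [sub_eq_neg_add, zpow_add, mul_apply, show (σ ^ k) s = (σ ^ l) s from hkl, zpow_neg,
      ← mul_apply, inv_mul_cancel, one_apply]
  obtain ⟨p, hp⟩ := Int.eq_nat_or_neg (k - l)
  have hp_fix : σ^[p] s = s := by
    rcases hp with hp | hp
    · rwa [hp, zpow_natCast_apply] at hfix
    · rwa [hp, zpow_neg, inv_eq_iff_eq, zpow_natCast_apply, eq_comm] at hfix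
  by_contra hne
  exact hs p (by omega) hp_fix

end Equiv.Perm

section OrbitCoeff

open Equiv

variable {α 𝕜 : Type*} [Field 𝕜]

/-- The coefficient of `δ_{σᵏ(s)}` in the bilateral series `μ`. -/
def orbitCoeff (σ : Perm α) (wn : ℕ → α → 𝕜) (lam : 𝕜) (s : α) : ℤ → 𝕜
  | (n : ℕ) => lam⁻¹ ^ n * wn n s
  | Int.negSucc n => lam ^ (n + 1) / wn (n + 1) ((⇑σ.symm)^[n + 1] s)

theorem orbitCoeff_natCast (σ : Perm α) (wn : ℕ → α → 𝕜) (lam : 𝕜) (s : α) (n : ℕ) :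
    orbitCoeff σ wn lam s n = lam⁻¹ ^ n * wn n s :=
  rfl

theorem orbitCoeff_neg_natCast_add_one (σ : Perm α) (wn : ℕ → α → 𝕜) (lam : 𝕜) (s : α) (n : ℕ) :
    orbitCoeff σ wn lam s (-((n : ℤ) + 1)) = lam ^ (n + 1) / wn (n + 1) ((⇑σ.symm)^[n + 1] s) :=
  rfl

theorem orbitCoeff_mul_apply {σ : Perm α} {w : α → 𝕜} {wn : ℕ → α → 𝕜}
    (hwn : ∀ (n : ℕ) (t : α), wn n t = ∏ i ∈ Finset.range n, w (σ^[i] t))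
    {lam : 𝕜} (hlam : lam ≠ 0) {s : α}
    (hden : ∀ n : ℕ, wn (n + 1) ((⇑σ.symm)^[n + 1] s) ≠ 0) (k : ℤ) :
    orbitCoeff σ wn lam s k * w ((σ ^ k) s) = lam * orbitCoeff σ wn lam s (k + 1) := by
  have hwn_zero (t : α) : wn 0 t = 1 := by simp [hwn]
  have hwn_succ (n : ℕ) (t : α) : wn (n + 1) t = w t * wn n (σ t) := by
    simp only [hwn, Finset.prod_range_succ', iterate_succ_apply, iterate_zero_apply]
    ring
  match k with
  | (n : ℕ) =>
    change lam⁻¹ ^ n * wn n s * w ((σ ^ (n : ℤ)) s) = lam * (lam⁻¹ ^ (n + 1) * wn (n + 1) s)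
    rw [Perm.zpow_natCast_apply, hwn, hwn, Finset.prod_range_succ, pow_succ]
    field_simp
  | Int.negSucc n =>
    have hstep : σ ((⇑σ.symm)^[n + 1] s) = (⇑σ.symm)^[n] s := by
      rw [iterate_succ_apply', Equiv.apply_symm_apply]
    have hw : w ((⇑σ.symm)^[n + 1] s) ≠ 0 := by
      intro h
      exact hden n (by rw [hwn_succ, h, zero_mul])
    have hnext : orbitCoeff σ wn lam s (Int.negSucc n + 1) = lam ^ n / wn n ((⇑σ.symm)^[n] s) := by
      cases n with
      | zero => simp [orbitCoeff, hwn_zero]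
      | succ m => rfl
    rw [hnext]
    change lam ^ (n + 1) / wn (n + 1) ((⇑σ.symm)^[n + 1] s) * w ((σ ^ (-((n : ℤ) + 1))) s) = _
    rw [Perm.zpow_neg_natCast_add_one_apply, hwn_succ, hstep]
    field_simp
    ring

end OrbitCoeff

section PointMasses

open ContinuousMap

variable {K 𝕜 : Type*} [TopologicalSpace K] [RCLike 𝕜]

theorem exists_continuous_eqOn_zero_eq_one_of_notMem [NormalSpace K] [T1Space K] {S : Set K}
    (hS : IsClosed S) {p : K} (hp : p ∉ S) :
    ∃ g : C(K, 𝕜), EqOn g 0 S ∧ g p = 1 ∧ ∀ t, ‖g t‖ ≤ 1 := by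
  obtain ⟨f, hf0, hf1, hf01⟩ := exists_continuous_zero_one_of_isClosed hS isClosed_singleton
    (disjoint_singleton_right.2 hp)
  refine ⟨⟨fun t => (f t : 𝕜), RCLike.continuous_ofReal.comp f.continuous⟩, fun t ht => ?_, ?_,
    fun t => ?_⟩
  · simp [hf0 ht]
  · simp [hf1 (mem_singleton p)]
  · simpa [abs_of_nonneg (hf01 t).1] using (hf01 t).2

variable [CompactSpace K] {ι : Type*}

theorem norm_evalCLM_le_one (t : K) : ‖evalCLM (M := 𝕜) 𝕜 t‖ ≤ 1 :=
  ContinuousLinearMap.opNorm_le_bound _ zero_le_one fun g => by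
    simpa using g.norm_coe_le_norm t

theorem summable_smul_evalCLM {c : ι → 𝕜} (hc : Summable (‖c ·‖)) (x : ι → K) :
    Summable fun i => c i • evalCLM (M := 𝕜) 𝕜 (x i) :=
  .of_norm_bounded hc fun i => by
    rw [norm_smul]
    exact mul_le_of_le_one_right (norm_nonneg _) (norm_evalCLM_le_one _)

theorem tsum_smul_evalCLM_apply {c : ι → 𝕜} (hc : Summable (‖c ·‖)) (x : ι → K) (g : C(K, 𝕜)) :
    (∑' i, c i • evalCLM 𝕜 (x i)) g = ∑' i, c i * g (x i) := by
  simpa using (ContinuousLinearMap.apply 𝕜 𝕜 g).map_tsum (summable_smul_evalCLM hc x)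

theorem tsum_smul_evalCLM_comp_eq_smul {f : K → K} {w : C(K, 𝕜)} {T : C(K, 𝕜) →L[𝕜] C(K, 𝕜)}
    (hT : ∀ (g : C(K, 𝕜)) (t : K), T g t = w t * g (f t)) {x : ℤ → K}
    (hx : ∀ k, x (k + 1) = f (x k)) {c : ℤ → 𝕜} (hc : Summable (‖c ·‖)) {lam : 𝕜}
    (hrec : ∀ k, c k * w (x k) = lam * c (k + 1)) :
    (∑' k, c k • evalCLM 𝕜 (x k)).comp T = lam • ∑' k, c k • evalCLM 𝕜 (x k) := by
  ext g
  simp only [ContinuousLinearMap.comp_apply, _root_.smul_apply, smul_eq_mul,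
    tsum_smul_evalCLM_apply hc]
  calc ∑' k, c k * T g (x k)
      = ∑' k, lam * (c (k + 1) * g (x (k + 1))) :=
        tsum_congr fun k => by rw [hT, ← hx, ← mul_assoc, hrec, mul_assoc]
    _ = lam * ∑' k, c (k + 1) * g (x (k + 1)) := tsum_mul_left
    _ = lam * ∑' k, c k * g (x k) :=
        congrArg (lam * ·) ((Equiv.addRight 1).tsum_eq fun k => c k * g (x k))

theorem tsum_smul_evalCLM_ne_zero [T2Space K] {x : ι → K} (hx : Injective x) {c : ι → 𝕜}
    (hc : Summable (‖c ·‖)) {i : ι} (hi : c i ≠ 0) :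
    ∑' n, c n • evalCLM (M := 𝕜) 𝕜 (x n) ≠ 0 := by
  classical
  have hbump (F : Finset ι) :
      ∃ g : C(K, 𝕜), EqOn g 0 (x '' (F.erase i)) ∧ g (x i) = 1 ∧ ∀ t, ‖g t‖ ≤ 1 :=
    exists_continuous_eqOn_zero_eq_one_of_notMem ((F.erase i).finite_toSet.image x).isClosed
      fun ⟨n, hn, hxn⟩ => Finset.notMem_erase i F (hx hxn ▸ hn)
  choose g hg0 hg1 hg_le using hbump
  have hlim : Tendsto (fun F => ∑' n, c n * g F (x n)) atTop
      (𝓝 (∑' n, Pi.single (M := fun _ => 𝕜) i (c i) n)) := by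
    refine tendsto_tsum_of_dominated_convergence hc (fun n => ?_) (.of_forall fun F n => ?_)
    · rcases eq_or_ne n i with rfl | hn
      · simp [hg1]
      · refine tendsto_const_nhds.congr' ?_
        filter_upwards [eventually_ge_atTop {n}] with F hF
        have hnF : n ∈ F.erase i := Finset.mem_erase.2 ⟨hn, hF (Finset.mem_singleton_self n)⟩
        simp [Pi.single_eq_of_ne hn, hg0 F ⟨n, hnF, rfl⟩]
    · rw [norm_mul]
      exact mul_le_of_le_one_right (norm_nonneg _) (hg_le F _)
  intro hμ
  have hzero : ∀ F, ∑' n, c n * g F (x n) = 0 := fun F => by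
    rw [← tsum_smul_evalCLM_apply hc, hμ, _root_.zero_apply]
  rw [tsum_pi_single, funext hzero] at hlim
  exact hi (tendsto_nhds_unique hlim tendsto_const_nhds)

end PointMasses

/-- If the bilateral series of point masses
`μ = ∑_{n≥0} λ⁻ⁿ wₙ(s) δ_{φⁿ(s)} + ∑_{n≥1} λⁿ δ_{φ⁻ⁿ(s)} / wₙ(φ⁻ⁿ(s))`
converges absolutely in `C(K)'`, with `s` not `φ`-periodic, then `μ` is a nonzero
eigenvector of the adjoint `T'` of the weighted composition operator `Tg = w·(g∘φ)`:
`T'μ = λμ`. -/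
theorem stmt16 {K : Type*} [TopologicalSpace K] [CompactSpace K] [T2Space K]
    (φ : K ≃ₜ K) (w : C(K, ℂ))
    (T : C(K, ℂ) →L[ℂ] C(K, ℂ))
    (hT : ∀ (g : C(K, ℂ)) (t : K), T g t = w t * g (φ t))
    (wn : ℕ → C(K, ℂ))
    (hwn : ∀ (n : ℕ) (t : K), wn n t = ∏ i ∈ Finset.range n, w ((⇑φ)^[i] t))
    (s : K) (hs : ∀ p : ℕ, 0 < p → (⇑φ)^[p] s ≠ s)
    (lam : ℂ) (hlam : lam ≠ 0)
    (hden : ∀ n : ℕ, wn (n + 1) ((⇑φ.symm)^[n + 1] s) ≠ 0)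
    (h1 : Summable fun n : ℕ => ‖lam⁻¹ ^ n * wn n s‖)
    (h2 : Summable fun n : ℕ => ‖lam ^ (n + 1) / wn (n + 1) ((⇑φ.symm)^[n + 1] s)‖) :
    ∀ μ : C(K, ℂ) →L[ℂ] ℂ,
      μ = (∑' n : ℕ, (lam⁻¹ ^ n * wn n s) • ContinuousMap.evalCLM ℂ ((⇑φ)^[n] s)) +
          (∑' n : ℕ, (lam ^ (n + 1) / wn (n + 1) ((⇑φ.symm)^[n + 1] s)) •
            ContinuousMap.evalCLM ℂ ((⇑φ.symm)^[n + 1] s)) →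
      μ.comp T = lam • μ ∧ μ ≠ 0 := by
  intro μ hμ
  let c := orbitCoeff φ.toEquiv (fun n => wn n) lam s
  have hc_nat : Summable fun n : ℕ => ‖c n‖ := by simpa only [c, orbitCoeff_natCast] using h1
  have hc_neg : Summable fun n : ℕ => ‖c (-(n + 1))‖ := by
    simpa only [c, orbitCoeff_neg_natCast_add_one, Homeomorph.coe_symm_toEquiv] using h2
  have hc : Summable (‖c ·‖) := .of_nat_of_neg_add_one hc_nat hc_neg
  have hμ_int : μ = ∑' k : ℤ, c k • ContinuousMap.evalCLM ℂ ((φ.toEquiv ^ k) s) := by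
    rw [hμ, tsum_of_nat_of_neg_add_one
      (f := fun k : ℤ => c k • ContinuousMap.evalCLM ℂ ((φ.toEquiv ^ k) s))
      (summable_smul_evalCLM hc_nat _) (summable_smul_evalCLM hc_neg _)]
    simp only [c, orbitCoeff_natCast, orbitCoeff_neg_natCast_add_one,
      Equiv.Perm.zpow_natCast_apply, Equiv.Perm.zpow_neg_natCast_add_one_apply,
      Homeomorph.coe_toEquiv, Homeomorph.coe_symm_toEquiv]
  subst hμ_int
  exact ⟨tsum_smul_evalCLM_comp_eq_smul hT (Equiv.Perm.zpow_add_one_apply φ.toEquiv s) hc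
    (orbitCoeff_mul_apply hwn hlam hden), tsum_smul_evalCLM_ne_zero
      (Equiv.Perm.injective_zpow_apply φ.toEquiv s hs) hc (i := 0) (by simp [c, orbitCoeff, hwn])⟩
end

section
/- Let X be a complex Banach space, D ⊂ ℂ open, and R : D → B(X) a function such that for every x ∈ X and every continuous linear functional G on X the scalar function λ ↦ G(R(λ)x) is analytic on D, and such that R(λ) = (λI − T)⁻¹ on D ∖ 𝕋 for a bounded operator T with σ(T) ⊆ 𝕋. Then D ∩ σ(T) = ∅, i.e. λI − T is invertible for all λ ∈ D. -/
/-!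
The products `R z * (z • 1 - T)` and `(z • 1 - T) * R z` are weakly continuous on `D`, as `R`
is, and equal `1` off the unit circle. The circle has empty interior, so `D ∖ 𝕋` is dense in the
open set `D`; since the dual separates points, the identities persist on all of `D`, and `R z` is
a two-sided inverse of `z • 1 - T` there.
-/

open Set Metric

section WeakContinuity

variable {α 𝕜 E F : Type*} [TopologicalSpace α] [NormedField 𝕜]
  [AddCommGroup E] [TopologicalSpace E] [Module 𝕜 E]
  [AddCommGroup F] [TopologicalSpace F] [Module 𝕜 F]

theorem ContinuousLinearMap.eqOn_of_dual_apply_continuousOn {A B : α → E →L[𝕜] F}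
    {s t : Set α} [SeparatingDual 𝕜 F]
    (hA : ∀ x (G : StrongDual 𝕜 F), ContinuousOn (fun z => G (A z x)) t)
    (hB : ∀ x (G : StrongDual 𝕜 F), ContinuousOn (fun z => G (B z x)) t)
    (h : EqOn A B s) (hst : s ⊆ t) (hts : t ⊆ closure s) : EqOn A B t := by
  intro z hz
  ext x
  refine (SeparatingDual.eq_iff_forall_dual_eq (R := 𝕜)).2 fun G => ?_
  exact EqOn.of_subset_closure (fun w hw => by simp only [h hw]) (hA x G) (hB x G) hst hts hz

variable [IsTopologicalAddGroup E] [ContinuousConstSMul 𝕜 E] {R : 𝕜 → E →L[𝕜] E} {D : Set 𝕜}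

theorem continuousOn_dual_apply_mul_smul_one_sub
    (hR : ∀ x (G : StrongDual 𝕜 E), ContinuousOn (fun z => G (R z x)) D) (T : E →L[𝕜] E)
    (x : E) (G : StrongDual 𝕜 E) :
    ContinuousOn (fun z => G ((R z * (z • 1 - T)) x)) D := by
  have hform : ∀ z, G ((R z * (z • 1 - T)) x) = z * G (R z x) - G (R z (T x)) := by
    intro z
    simp
  simp only [hform]
  exact (continuousOn_id.mul (hR x G)).sub (hR (T x) G)

theorem continuousOn_dual_apply_smul_one_sub_mul
    (hR : ∀ x (G : StrongDual 𝕜 E), ContinuousOn (fun z => G (R z x)) D) (T : E →L[𝕜] E)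
    (x : E) (G : StrongDual 𝕜 E) :
    ContinuousOn (fun z => G (((z • 1 - T) * R z) x)) D := by
  have hform : ∀ z, G (((z • 1 - T) * R z) x) = z * G (R z x) - (G.comp T) (R z x) := by
    intro z
    simp
  simp only [hform]
  exact (continuousOn_id.mul (hR x G)).sub (hR x (G.comp T))

end WeakContinuity

theorem stmt18_general {X : Type*} [NormedAddCommGroup X] [NormedSpace ℂ X]
    (T : X →L[ℂ] X)
    (D : Set ℂ) (hD : IsOpen D)
    (R : ℂ → X →L[ℂ] X)
    (hweak : ∀ (x : X) (G : X →L[ℂ] ℂ), DifferentiableOn ℂ (fun z => G (R z x)) D)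
    (hres : ∀ z ∈ D, ‖z‖ ≠ 1 →
      R z * (z • (1 : X →L[ℂ] X) - T) = 1 ∧ (z • (1 : X →L[ℂ] X) - T) * R z = 1) :
    D ∩ spectrum ℂ T = ∅ := by
  have hR : ∀ x (G : StrongDual ℂ X), ContinuousOn (fun z => G (R z x)) D :=
    fun x G => (hweak x G).continuousOn
  have hconst : ∀ x (G : StrongDual ℂ X), ContinuousOn (fun _ : ℂ => G ((1 : X →L[ℂ] X) x)) D :=
    fun _ _ => continuousOn_const
  have hdense : D ⊆ closure (D \ sphere 0 1) :=
    (interior_eq_empty_iff_dense_compl.1 (interior_sphere' 0 1)).open_subset_closure_inter hD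
  have hres' : ∀ z ∈ D \ sphere 0 1,
      R z * (z • 1 - T) = 1 ∧ (z • 1 - T) * R z = 1 := fun z hz =>
    hres z hz.1 (by simpa using hz.2)
  have hleft : EqOn (fun z => R z * (z • 1 - T)) 1 D :=
    ContinuousLinearMap.eqOn_of_dual_apply_continuousOn
      (continuousOn_dual_apply_mul_smul_one_sub hR T) hconst (fun z hz => (hres' z hz).1)
      sdiff_subset hdense
  have hright : EqOn (fun z => (z • 1 - T) * R z) 1 D :=
    ContinuousLinearMap.eqOn_of_dual_apply_continuousOn
      (continuousOn_dual_apply_smul_one_sub_mul hR T) hconst (fun z hz => (hres' z hz).2)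
      sdiff_subset hdense
  refine eq_empty_iff_forall_notMem.2 fun z ⟨hz, hzσ⟩ => hzσ ?_
  rw [spectrum.mem_resolventSet_iff, Algebra.algebraMap_eq_smul_one]
  exact ⟨⟨_, R z, hright hz, hleft hz⟩, rfl⟩

/-- Weak analyticity implies norm analyticity for resolvents: if `R : D → B(X)` is
weakly analytic on an open set `D` and coincides with the resolvent of `T` on `D ∖ 𝕋`,
where `σ(T) ⊆ 𝕋`, then `D` contains no spectral point of `T`. -/
theorem stmt18 {X : Type*} [NormedAddCommGroup X] [NormedSpace ℂ X] [CompleteSpace X]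
    (T : X →L[ℂ] X) (hσ : spectrum ℂ T ⊆ Metric.sphere (0 : ℂ) 1)
    (D : Set ℂ) (hD : IsOpen D)
    (R : ℂ → X →L[ℂ] X)
    (hweak : ∀ (x : X) (G : X →L[ℂ] ℂ), DifferentiableOn ℂ (fun z => G (R z x)) D)
    (hres : ∀ z ∈ D, ‖z‖ ≠ 1 →
      R z * (z • (1 : X →L[ℂ] X) - T) = 1 ∧ (z • (1 : X →L[ℂ] X) - T) * R z = 1) :
    D ∩ spectrum ℂ T = ∅ :=
  stmt18_general T D hD R hweak hres
end
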